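/- Let p, m, s be positive integers. Then Σ_{n=1}^∞ 1/(n^p (n+m)² (n+s)) = Σ_{v=0}^{p-1} ((-1)^p/(s^{p-v} m^{v+1})) { ζ(2) - H_m^{(2)} - (v+1) H_m/m + Σ_{n=0}^{v-1} (-m)^n (v-n) ζ(n+2) } + ((-1)^p/s^p) B₃(m,s), where B₃(m,s) = ζ(3) - H_m^{(3)} if m = s, and B₃(m,s) = ζ(2)/(s-m) + (H_m - H_s)/(s-m)² - H_m^{(2)}/(s-m) if m ≠ s. -/

import Mathlib

open Finset

/-- Generalized harmonic number `H_n^(r) = ∑_{k=1}^n 1/k^r`. -/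
noncomputable def Hgen (r n : ℕ) : ℝ := ∑ k ∈ Finset.Icc 1 n, (1 : ℝ) / (k : ℝ) ^ r

/-- Hyperharmonic numbers of non-negative order: `hpos 0 n = 1/n`,
`hpos (r+1) n = ∑_{k=1}^n hpos r k`.  In particular `hpos 1 n = H_n`. -/
noncomputable def hpos : ℕ → ℕ → ℝ
  | 0, n => 1 / (n : ℝ)
  | r + 1, n => ∑ k ∈ Finset.Icc 1 n, hpos r k

/-- Hyperharmonic numbers of negative order: `hneg r n = h_n^(-r)` for `r ≥ 1`. -/
noncomputable def hneg (r n : ℕ) : ℝ :=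
  if r < n then (-1 : ℝ) ^ r / (((n - r : ℕ) : ℝ) * (Nat.choose n r : ℝ))
  else ∑ k ∈ Finset.range n, (Nat.choose r k : ℝ) * (-1 : ℝ) ^ k / ((n - k : ℕ) : ℝ)

/-- Hyperharmonic numbers of arbitrary integer order. -/
noncomputable def hh (r : ℤ) (n : ℕ) : ℝ :=
  if 0 ≤ r then hpos r.toNat n else hneg (-r).toNat n

/-- Riemann zeta value `ζ(k) = ∑_{n=1}^∞ 1/n^k`. -/
noncomputable def zetaVal (k : ℕ) : ℝ := ∑' n : ℕ, 1 / ((n : ℝ) + 1) ^ k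

/-- Linear Euler sum `ζ_{H^(s)}(t) = ∑_{n=1}^∞ H_n^(s)/n^t`. -/
noncomputable def eulerSum (s t : ℕ) : ℝ := ∑' n : ℕ, Hgen s (n + 1) / ((n : ℝ) + 1) ^ t

/-- The set of Riemann zeta values `ζ(k)`, `k ≥ 2`. -/
def zetaSet : Set ℝ := {x | ∃ k : ℕ, 2 ≤ k ∧ x = zetaVal k}

/-- The set of Riemann zeta values together with linear Euler sums. -/
def zetaEulerSet : Set ℝ :=
  zetaSet ∪ {x | ∃ s t : ℕ, 1 ≤ s ∧ 2 ≤ t ∧ x = eulerSum s t}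

/-- `B₃(m,s)`. -/
noncomputable def B3 (m s : ℕ) : ℝ :=
  if m = s then zetaVal 3 - Hgen 3 m
  else zetaVal 2 / ((s : ℝ) - (m : ℝ)) + (Hgen 1 m - Hgen 1 s) / ((s : ℝ) - (m : ℝ)) ^ 2 -
    Hgen 2 m / ((s : ℝ) - (m : ℝ))

open Filter Topology

/-!
Each summand is peeled apart by the partial fraction identity
`1 / (x ^ (k + 1) * (x + c)) = (1 / x ^ (k + 1) - 1 / (x ^ k * (x + c))) / c`,
first with `c = s`, which reduces the exponent of `x = n` down to `0` and leaves
`∑ 1 / ((n + m) ^ 2 * (n + s)) = B₃(m, s)`, and then with `c = m`, which reduces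
`∑ 1 / (n ^ (q + 1) * (n + m) ^ 2)` and `∑ 1 / (n ^ (r + 1) * (n + m))` to zeta values, zeta tails
`ζ(k) - H_m^(k)` and the telescoping series `∑ (1 / n - 1 / (n + m)) = H_m`.
-/

lemma HasSum.congr_fun_of_eq {α β : Type*} [AddCommMonoid α] [TopologicalSpace α] {f g : β → α}
    {a b : α} (h : HasSum f a) (hfg : ∀ n, f n = g n) (hab : a = b) : HasSum g b :=
  hab ▸ h.congr_fun fun n => (hfg n).symm

lemma Hgen_succ (r n : ℕ) : Hgen r (n + 1) = Hgen r n + 1 / ((n : ℝ) + 1) ^ r := by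
  rw [Hgen, Hgen, sum_Icc_succ_top (by omega), Nat.cast_succ]

lemma Hgen_eq_sum_range (r n : ℕ) : Hgen r n = ∑ i ∈ range n, 1 / ((i : ℝ) + 1) ^ r := by
  induction n with
  | zero => simp [Hgen]
  | succ n ih => rw [Hgen_succ, ih, sum_range_succ]

lemma hasSum_zetaVal {k : ℕ} (hk : 2 ≤ k) :
    HasSum (fun n : ℕ => 1 / ((n : ℝ) + 1) ^ k) (zetaVal k) := by
  have : Summable fun n : ℕ => 1 / ((n : ℝ) + 1) ^ k := by
    exact_mod_cast (summable_nat_add_iff 1).mpr (Real.summable_one_div_nat_pow.mpr hk)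
  exact this.hasSum

lemma hasSum_one_div_add_pow {k : ℕ} (hk : 2 ≤ k) (a : ℕ) :
    HasSum (fun n : ℕ => 1 / ((n : ℝ) + 1 + a) ^ k) (zetaVal k - Hgen k a) := by
  have hshift : (fun n : ℕ => 1 / ((n : ℝ) + 1 + a) ^ k) =
      fun n => 1 / (((n + a : ℕ) : ℝ) + 1) ^ k := by
    ext n; push_cast; ring
  rw [hshift, Hgen_eq_sum_range]
  exact (hasSum_nat_add_iff' a).mpr (hasSum_zetaVal hk)

lemma hasSum_sub_succ_of_antitone {g : ℕ → ℝ} {l : ℝ} (hg : Antitone g)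
    (hl : Tendsto g atTop (𝓝 l)) : HasSum (fun n => g n - g (n + 1)) (g 0 - l) := by
  rw [hasSum_iff_tendsto_nat_of_nonneg fun n => sub_nonneg.mpr (hg n.le_succ)]
  simp_rw [sum_range_sub']
  exact tendsto_const_nhds.sub hl

lemma hasSum_one_div_sub_one_div_add (a : ℕ) :
    HasSum (fun n : ℕ => 1 / ((n : ℝ) + 1) - 1 / ((n : ℝ) + 1 + a)) (Hgen 1 a) := by
  induction a with
  | zero => simp [Hgen, hasSum_zero]
  | succ a ih =>
    have htail : Tendsto (fun n : ℕ => 1 / ((n : ℝ) + 1 + a)) atTop (𝓝 0) :=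
      tendsto_const_nhds.div_atTop <| tendsto_atTop_add_const_right _ _ <|
        tendsto_atTop_add_const_right _ _ tendsto_natCast_atTop_atTop
    have htel := hasSum_sub_succ_of_antitone (fun i j hij => by gcongr) htail
    convert ih.add htel using 1
    · ext n; push_cast; ring
    · rw [Hgen_succ]; push_cast; ring

noncomputable def linBracket (m r : ℕ) : ℝ :=
  Hgen 1 m / m - ∑ n ∈ range r, (-(m : ℝ)) ^ n * zetaVal (n + 2)

noncomputable def sqBracket (m v : ℕ) : ℝ :=
  zetaVal 2 - Hgen 2 m - ((v : ℝ) + 1) * Hgen 1 m / m +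
    ∑ n ∈ range v, (-(m : ℝ)) ^ n * ((v - n : ℕ) : ℝ) * zetaVal (n + 2)

lemma sqBracket_succ (m q : ℕ) : sqBracket m (q + 1) = sqBracket m q - linBracket m (q + 1) := by
  have hweights : ∑ n ∈ range (q + 1), (-(m : ℝ)) ^ n * ((q + 1 - n : ℕ) : ℝ) * zetaVal (n + 2) =
      ∑ n ∈ range q, (-(m : ℝ)) ^ n * ((q - n : ℕ) : ℝ) * zetaVal (n + 2) +
        ∑ n ∈ range (q + 1), (-(m : ℝ)) ^ n * zetaVal (n + 2) := by
    have hterm : ∀ n ∈ range q, (-(m : ℝ)) ^ n * ((q + 1 - n : ℕ) : ℝ) * zetaVal (n + 2) =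
        (-(m : ℝ)) ^ n * ((q - n : ℕ) : ℝ) * zetaVal (n + 2) + (-(m : ℝ)) ^ n * zetaVal (n + 2) :=
      fun n hn => by rw [Nat.sub_add_comm (mem_range.mp hn).le, Nat.cast_succ]; ring
    rw [sum_range_succ _ q, sum_range_succ _ q, sum_congr rfl hterm, sum_add_distrib,
      Nat.sub_add_comm le_rfl, Nat.sub_self]
    push_cast
    ring
  rw [sqBracket, sqBracket, linBracket, hweights]
  push_cast
  ring

lemma hasSum_one_div_pow_mul_add {m : ℕ} (hm : 0 < m) (r : ℕ) :
    HasSum (fun n : ℕ => 1 / (((n : ℝ) + 1) ^ (r + 1) * ((n : ℝ) + 1 + m)))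
      ((-1) ^ r / (m : ℝ) ^ r * linBracket m r) := by
  have hm' : (m : ℝ) ≠ 0 := by positivity
  induction r with
  | zero =>
    refine ((hasSum_one_div_sub_one_div_add m).div_const (m : ℝ)).congr_fun_of_eq
      (fun n => by field_simp; ring) ?_
    simp [linBracket]
  | succ r ih =>
    refine (((hasSum_zetaVal (k := r + 2) (by omega)).sub ih).div_const (m : ℝ)).congr_fun_of_eq
      (fun n => by field_simp; ring) ?_
    rw [linBracket, linBracket, sum_range_succ, neg_pow (m : ℝ) r]
    obtain h | h := neg_one_pow_eq_or ℝ r <;> simp only [pow_succ, h] <;> field_simp <;> ring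

lemma hasSum_one_div_pow_mul_add_sq {m : ℕ} (hm : 0 < m) (q : ℕ) :
    HasSum (fun n : ℕ => 1 / (((n : ℝ) + 1) ^ (q + 1) * ((n : ℝ) + 1 + m) ^ 2))
      ((-1) ^ (q + 1) / (m : ℝ) ^ (q + 1) * sqBracket m q) := by
  have hm' : (m : ℝ) ≠ 0 := by positivity
  induction q with
  | zero =>
    refine (((hasSum_one_div_pow_mul_add hm 0).sub
      (hasSum_one_div_add_pow le_rfl m)).div_const (m : ℝ)).congr_fun_of_eq
      (fun n => by field_simp; ring) ?_
    simp only [linBracket, sqBracket, range_zero, sum_empty, Nat.cast_zero]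
    field_simp
    ring
  | succ q ih =>
    refine (((hasSum_one_div_pow_mul_add hm (q + 1)).sub ih).div_const (m : ℝ)).congr_fun_of_eq
      (fun n => by field_simp; ring) ?_
    rw [sqBracket_succ]
    obtain h | h := neg_one_pow_eq_or ℝ q <;> simp only [pow_succ, h] <;> field_simp <;> ring

lemma hasSum_one_div_add_sq_mul_add (m s : ℕ) :
    HasSum (fun n : ℕ => 1 / (((n : ℝ) + 1 + m) ^ 2 * ((n : ℝ) + 1 + s))) (B3 m s) := by
  by_cases hms : m = s
  · subst hms
    exact (hasSum_one_div_add_pow (k := 3) (by norm_num) m).congr_fun_of_eq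
      (fun n => by ring) (by rw [B3, if_pos rfl])
  · have hsm : (s : ℝ) - m ≠ 0 := sub_ne_zero.mpr (Nat.cast_injective.ne (Ne.symm hms))
    have hdiff : HasSum (fun n : ℕ => 1 / ((n : ℝ) + 1 + m) - 1 / ((n : ℝ) + 1 + s))
        (Hgen 1 s - Hgen 1 m) :=
      ((hasSum_one_div_sub_one_div_add s).sub (hasSum_one_div_sub_one_div_add m)).congr_fun_of_eq
        (fun n => by ring) rfl
    refine (((hasSum_one_div_add_pow le_rfl m).div_const ((s : ℝ) - m)).sub
      (hdiff.div_const (((s : ℝ) - m) ^ 2))).congr_fun_of_eq (fun n => by field_simp; ring) ?_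
    rw [B3, if_neg hms]
    field_simp
    ring

lemma hasSum_one_div_pow_mul_add_sq_mul_add {m s : ℕ} (hm : 0 < m) (hs : 0 < s) (q : ℕ) :
    HasSum (fun n : ℕ => 1 / (((n : ℝ) + 1) ^ q * ((n : ℝ) + 1 + m) ^ 2 * ((n : ℝ) + 1 + s)))
      (∑ v ∈ range q, (-1) ^ q / ((s : ℝ) ^ (q - v) * (m : ℝ) ^ (v + 1)) * sqBracket m v +
        (-1) ^ q / (s : ℝ) ^ q * B3 m s) := by
  have hs' : (s : ℝ) ≠ 0 := by positivity
  induction q with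
  | zero =>
    exact (hasSum_one_div_add_sq_mul_add m s).congr_fun_of_eq (fun n => by ring) (by simp)
  | succ q ih =>
    refine (((hasSum_one_div_pow_mul_add_sq hm q).div_const s).sub
      (ih.div_const s)).congr_fun_of_eq (fun n => by field_simp; ring) ?_
    have hterm : ∀ v ∈ range q, (-1) ^ (q + 1) / ((s : ℝ) ^ (q + 1 - v) * (m : ℝ) ^ (v + 1)) *
        sqBracket m v = -((-1) ^ q / ((s : ℝ) ^ (q - v) * (m : ℝ) ^ (v + 1)) * sqBracket m v / s) :=
      fun v hv => by rw [Nat.sub_add_comm (mem_range.mp hv).le, pow_succ, pow_succ]; field_simp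
    rw [sum_range_succ, sum_congr rfl hterm, sum_neg_distrib, ← sum_div, Nat.sub_add_comm le_rfl,
      Nat.sub_self]
    field_simp
    ring

theorem stmt18_general (p m s : ℕ) (hm : 1 ≤ m) (hs : 1 ≤ s) :
    ∑' n : ℕ, 1 / (((n + 1 : ℕ) : ℝ) ^ p * ((n + 1 + m : ℕ) : ℝ) ^ 2 *
        ((n + 1 + s : ℕ) : ℝ)) =
      (∑ v ∈ Finset.range p, (-1 : ℝ) ^ p / ((s : ℝ) ^ (p - v) * (m : ℝ) ^ (v + 1)) *
        (zetaVal 2 - Hgen 2 m - ((v : ℝ) + 1) * Hgen 1 m / (m : ℝ) +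
         ∑ n ∈ Finset.range v, (-(m : ℝ)) ^ n * ((v - n : ℕ) : ℝ) * zetaVal (n + 2))) +
      (-1 : ℝ) ^ p / (s : ℝ) ^ p * B3 m s :=
  ((hasSum_one_div_pow_mul_add_sq_mul_add hm hs p).congr_fun fun n => by push_cast; rfl).tsum_eq

theorem stmt18 (p m s : ℕ) (hp : 1 ≤ p) (hm : 1 ≤ m) (hs : 1 ≤ s) :
    ∑' n : ℕ, 1 / (((n + 1 : ℕ) : ℝ) ^ p * ((n + 1 + m : ℕ) : ℝ) ^ 2 *
        ((n + 1 + s : ℕ) : ℝ)) =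
      (∑ v ∈ Finset.range p, (-1 : ℝ) ^ p / ((s : ℝ) ^ (p - v) * (m : ℝ) ^ (v + 1)) *
        (zetaVal 2 - Hgen 2 m - ((v : ℝ) + 1) * Hgen 1 m / (m : ℝ) +
         ∑ n ∈ Finset.range v, (-(m : ℝ)) ^ n * ((v - n : ℕ) : ℝ) * zetaVal (n + 2))) +
      (-1 : ℝ) ^ p / (s : ℝ) ^ p * B3 m s :=
  stmt18_general p m s hm hs
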